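/- For all integers k ≥ 1 and i ≥ 0 with 2i ≤ k−1: S_{k+1, i+1} = 2 · S_{k,i}. -/

import Mathlib

/-!
Summing over `m` first, the inner sum of `S_{k,i}` is a coefficient count: with `n = k - 2i`,
`∑ₘ C(n, s+2m) C(s+2m, m) 2^(n-s-2m)` is the coefficient of `X^(n+s)` in
`(X² + 1 + 2X)^n = (X + 1)^(2n)`, i.e. `C(2n, n+s)`. What remains is Vandermonde's
`C(2(i+n), i+n) = ∑ⱼ C(2i, j) C(2n, i+n-j)` folded about its centre `j = i`; the fold doubles the
terms with `s ≥ 1`, which is what the weight `2^(-max(0, s-1))` accounts for. Hence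
`S_{k,i} = C(2(k-i), k-i) / 2^(k-2i)`, and raising `k` and `i` by one halves this denominator
while keeping `k - i`.
-/

open Finset

/-- The combinatorial quantity `S_{k,i}` from the study of iterated five-term
recurrence coefficients.  Here `s - 1` and `k - 2*i - s` denote truncated natural
subtraction, so `s - 1 = max {0, s-1}`. -/
noncomputable def Squant (k i : ℕ) : ℝ :=
  ∑ s ∈ Finset.range (min i (k - 2 * i) + 1),
    ((2 * i).choose (s + i) : ℝ) *
      ∑ m ∈ Finset.range ((k - 2 * i - s) / 2 + 1),
        ((k - 2 * i).choose (s + 2 * m) : ℝ) * ((s + 2 * m).choose m : ℝ) /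
          2 ^ (2 * m + (s - 1))

open Polynomial

theorem Polynomial.coeff_X_sq_add_one_pow {R : Type*} [CommSemiring R] (j d : ℕ) :
    ((X ^ 2 + 1 : R[X]) ^ j).coeff d = if 2 ∣ d then (j.choose (d / 2) : R) else 0 := by
  have : (X ^ 2 + 1 : R[X]) ^ j = expand R 2 ((X + 1) ^ j) := by simp
  rw [this, coeff_expand two_pos, coeff_X_add_one_pow]

theorem Nat.choose_two_mul_eq_sum (n s : ℕ) (hs : s ≤ n) :
    (2 * n).choose (n + s) = ∑ m ∈ range ((n - s) / 2 + 1),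
      n.choose (s + 2 * m) * (s + 2 * m).choose m * 2 ^ (n - s - 2 * m) := by
  -- `g j`: contribution of the terms of `(X² + 1 + 2X)^n` with `j` factors `X² + 1`
  set g : ℕ → ℕ := fun j =>
    n.choose j * 2 ^ (n - j) * if 2 ∣ s + j then j.choose ((s + j) / 2) else 0
  have hexpand : ((X + 1 : ℕ[X]) ^ (2 * n)) =
      ∑ j ∈ range (n + 1), X ^ (n - j) * ((X ^ 2 + 1) ^ j * C (n.choose j * 2 ^ (n - j))) := by
    rw [pow_mul, show (X + 1 : ℕ[X]) ^ 2 = (X ^ 2 + 1) + C 2 * X by simp; ring, add_pow]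
    refine sum_congr rfl fun j _ => ?_
    rw [map_mul, map_pow, ← C_eq_natCast, Nat.cast_id, mul_pow]
    ring
  have hcoeff : (2 * n).choose (n + s) = ∑ j ∈ range (n + 1), g j := by
    rw [← Nat.cast_id ((2 * n).choose (n + s)), ← coeff_X_add_one_pow ℕ, hexpand,
      finsetSum_coeff]
    refine sum_congr rfl fun j hj => ?_
    rw [mem_range] at hj
    rw [coeff_X_pow_mul', if_pos (by omega), coeff_mul_C, coeff_X_sq_add_one_pow,
      show n + s - (n - j) = s + j by omega]
    simp only [g, Nat.cast_id]
    ring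
  have hinj : Set.InjOn (fun m => s + 2 * m) (range ((n - s) / 2 + 1) : Set ℕ) := by
    intro a _ b _ h; simp only at h; omega
  rw [hcoeff, ← sum_subset (s₁ := (range ((n - s) / 2 + 1)).image (fun m => s + 2 * m)),
    sum_image hinj]
  · refine sum_congr rfl fun m _ => ?_
    simp only [g, if_pos (show 2 ∣ s + (s + 2 * m) from ⟨s + m, by ring⟩),
      show (s + (s + 2 * m)) / 2 = s + m by omega, Nat.sub_sub]
    rw [Nat.choose_symm_of_eq_add (show s + 2 * m = (s + m) + m by ring)]
    ring
  · intro j hj; simp only [mem_image, mem_range] at hj ⊢; omega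
  · intro j hj hnot
    simp only [mem_image, mem_range, not_exists, not_and] at hj hnot
    simp only [g]
    split_ifs with hev
    · rw [Nat.choose_eq_zero_of_lt (n := j), mul_zero]
      by_contra hle
      exact hnot ((j - s) / 2) (by omega) (by omega)
    · rw [mul_zero]

theorem Nat.centralBinom_add (a b : ℕ) :
    (a + b).centralBinom = a.centralBinom * b.centralBinom +
      2 * ∑ s ∈ range (min a b), (2 * a).choose (a + s + 1) * (2 * b).choose (b + s + 1) := by
  simp only [Nat.centralBinom_eq_two_mul_choose]
  set g : ℕ → ℕ := fun s => (2 * a).choose (a + s) * (2 * b).choose (b + s)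
  have htrunc : ∀ N, min a b ≤ N →
      ∑ s ∈ range N, g (s + 1) = ∑ s ∈ range (min a b), g (s + 1) := by
    refine fun N hN => (sum_subset (range_subset_range.2 hN) fun s hs hs' => ?_).symm
    simp only [mem_range, not_lt] at hs hs'
    rcases min_le_iff.1 hs' with h | h
    · simp [g, Nat.choose_eq_zero_of_lt (show 2 * a < a + (s + 1) by omega)]
    · simp [g, Nat.choose_eq_zero_of_lt (show 2 * b < b + (s + 1) by omega)]
  have hbelow : ∑ j ∈ range a, (2 * a).choose j * (2 * b).choose (a + b - j) =
      ∑ s ∈ range a, g (s + 1) := by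
    rw [← sum_range_reflect]
    refine sum_congr rfl fun s hs => ?_
    rw [mem_range] at hs
    rw [Nat.choose_symm_of_eq_add (show 2 * a = (a - 1 - s) + (a + (s + 1)) by omega),
      show a + b - (a - 1 - s) = b + (s + 1) by omega]
  have habove : ∑ x ∈ range (b + 1), (2 * a).choose (a + x) * (2 * b).choose (a + b - (a + x)) =
      ∑ s ∈ range (b + 1), g s := by
    refine sum_congr rfl fun s hs => ?_
    rw [mem_range] at hs
    rw [show a + b - (a + s) = b - s by omega,
      Nat.choose_symm_of_eq_add (show 2 * b = (b - s) + (b + s) by omega)]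
  rw [show 2 * (a + b) = 2 * a + 2 * b by ring, Nat.add_choose_eq,
    Nat.sum_antidiagonal_eq_sum_range_succ (fun p q => (2 * a).choose p * (2 * b).choose q),
    show (a + b).succ = a + (b + 1) by omega, sum_range_add, hbelow, habove, sum_range_succ',
    htrunc a (min_le_left a b), htrunc b (min_le_right a b)]
  simp only [g, add_zero, ← add_assoc]
  ring

theorem sum_choose_mul_choose_div_two_pow (n s : ℕ) (hs : s ≤ n) :
    ∑ m ∈ range ((n - s) / 2 + 1),
      (n.choose (s + 2 * m) : ℝ) * (s + 2 * m).choose m / 2 ^ (2 * m + (s - 1)) =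
      (2 * n).choose (n + s) / 2 ^ (n - s + (s - 1)) := by
  rw [Nat.choose_two_mul_eq_sum n s hs]
  push_cast
  rw [sum_div]
  refine sum_congr rfl fun m hm => ?_
  rw [mem_range] at hm
  rw [show n - s + (s - 1) = (n - s - 2 * m) + (2 * m + (s - 1)) by omega,
    pow_add (2 : ℝ) (n - s - 2 * m)]
  field_simp

theorem Squant_eq_centralBinom_div_two_pow (k i : ℕ) (h : 2 * i ≤ k) :
    Squant k i = (k - i).centralBinom / 2 ^ (k - 2 * i) := by
  obtain ⟨n, rfl⟩ := Nat.exists_eq_add_of_le h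
  rw [show 2 * i + n - i = i + n by omega, Nat.add_sub_cancel_left, Nat.centralBinom_add,
    Nat.centralBinom_eq_two_mul_choose i, Nat.centralBinom_eq_two_mul_choose n]
  unfold Squant
  rw [Nat.add_sub_cancel_left, sum_range_succ']
  rcases Nat.eq_zero_or_pos n with rfl | hn
  · simp
  have hterm : ∀ s ∈ range (min i n), ((2 * i).choose (s + 1 + i) : ℝ) *
      ∑ m ∈ range ((n - (s + 1)) / 2 + 1), (n.choose (s + 1 + 2 * m) : ℝ) *
        (s + 1 + 2 * m).choose m / 2 ^ (2 * m + (s + 1 - 1)) =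
      2 * ((2 * i).choose (i + s + 1) * (2 * n).choose (n + s + 1)) / 2 ^ n := by
    intro s hs
    rw [mem_range] at hs
    rw [sum_choose_mul_choose_div_two_pow n (s + 1) (by omega),
      show n - (s + 1) + (s + 1 - 1) = n - 1 by omega, show s + 1 + i = i + s + 1 by ring,
      ← add_assoc n,
      show (2 : ℝ) ^ n = 2 * 2 ^ (n - 1) by rw [← pow_succ', Nat.sub_add_cancel hn]]
    field_simp
  rw [sum_congr rfl hterm, sum_choose_mul_choose_div_two_pow n 0 (Nat.zero_le n), ← sum_div,
    ← mul_sum]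
  push_cast
  simp only [zero_add, add_zero, Nat.sub_zero]
  ring

theorem Squant_doubling (k i : ℕ) (hk : 1 ≤ k) (hi : 2 * i ≤ k - 1) :
    Squant (k + 1) (i + 1) = 2 * Squant k i := by
  rw [Squant_eq_centralBinom_div_two_pow _ _ (by omega),
    Squant_eq_centralBinom_div_two_pow _ _ (by omega),
    show k + 1 - (i + 1) = k - i by omega,
    show k - 2 * i = k + 1 - 2 * (i + 1) + 1 by omega, pow_succ]
  field_simp
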